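/- arXiv:2103.00382 — 2 statements merged into one kernel-verified Lean document; each statement's English description precedes it below -/
import Mathlib

section
/- With notation as in the restricted root space decomposition, for any X ∈ t and any restricted root α with α(X) ≠ 0, the map ad(X) restricts to a linear isomorphism from k_{t,[α]} onto p_{t,[α]}; in particular dim k_{t,[α]} = dim p_{t,[α]}. -/
/-!
Since `t` is abelian, the Jacobi identity makes `ad X` commute with every `ad Y`, `Y ∈ t`, so
`ad X` preserves `g_{t,[α]}`, on which `(ad X)² = -4π²α(X)²` is a nonzero scalar. Since
`σ X = -X`, `ad X` swaps `k` and `p`. Hence `ad X : k_{t,[α]} → p_{t,[α]}` is bijective, with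
inverse `-(4π²α(X)²)⁻¹ ad X`.
-/

open scoped RealInnerProductSpace

noncomputable section

/-- The restricted root space `g_{t,[α]} = ⋂_{X ∈ t} ker (ad(X)² + 4π²α(X)²·id)` of a
maximal abelian subalgebra `t ⊆ p`, for a linear form `α : t → ℝ`.  The Lie bracket of
`g` is given by the bilinear map `br`. -/
def restrictedRootSpace {g : Type*} [NormedAddCommGroup g] [InnerProductSpace ℝ g]
    (br : g →ₗ[ℝ] g →ₗ[ℝ] g) (t : Submodule ℝ g) (α : t →ₗ[ℝ] ℝ) : Submodule ℝ g :=
  ⨅ X : t, LinearMap.ker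
    ((br (X : g)) ∘ₗ (br (X : g)) + (4 * Real.pi ^ 2 * (α X) ^ 2) • LinearMap.id)

open Set

theorem Set.BijOn.finrank_eq {K V W : Type*} [DivisionRing K] [AddCommGroup V] [Module K V]
    [AddCommGroup W] [Module K W] {f : V →ₗ[K] W} {M : Submodule K V} {N : Submodule K W}
    (hf : BijOn f M N) : Module.finrank K M = Module.finrank K N :=
  (LinearEquiv.ofBijective (f.restrict hf.mapsTo) hf.bijective).finrank_eq

theorem bijOn_of_mapsTo_of_comp_self_eq_smul {K V : Type*} [Field K] [AddCommGroup V]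
    [Module K V] (f : V →ₗ[K] V) {M N : Submodule K V} (hMN : MapsTo f M N) (hNM : MapsTo f N M)
    {c : K} (hc : c ≠ 0) (hM : ∀ z ∈ M, f (f z) = c • z) (hN : ∀ z ∈ N, f (f z) = c • z) :
    BijOn f M N := by
  refine InvOn.bijOn (f' := c⁻¹ • f) ⟨fun z hz => ?_, fun w hw => ?_⟩ hMN
    fun w hw => M.smul_mem c⁻¹ (hNM hw)
  · show c⁻¹ • f (f z) = z
    simp only [hM z hz, smul_smul, inv_mul_cancel₀ hc, one_smul]
  · show f (c⁻¹ • f w) = w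
    simp only [map_smul, hN w hw, smul_smul, inv_mul_cancel₀ hc, one_smul]

section Bracket

variable {K V : Type*} [CommRing K] [AddCommGroup V] [Module K V] (br : V →ₗ[K] V →ₗ[K] V)

theorem br_br_comm_of_br_eq_zero
    (hjacobi : ∀ x y z : V, br x (br y z) = br (br x y) z + br y (br x z))
    {X Y : V} (hYX : br Y X = 0) (w : V) : br Y (br X w) = br X (br Y w) := by
  simpa [hYX] using hjacobi Y X w

variable {σ : V →ₗ[K] V} {k p : Submodule K V} {X : V}

theorem mapsTo_br_fixed_antifixed (hσbr : ∀ x y, σ (br x y) = br (σ x) (σ y))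
    (hk : ∀ x, x ∈ k ↔ σ x = x) (hp : ∀ x, x ∈ p ↔ σ x = -x) (hX : X ∈ p) :
    MapsTo (br X) k p := fun z hz => by
  rw [SetLike.mem_coe, hp, hσbr, (hp X).1 hX, (hk z).1 hz, map_neg, LinearMap.neg_apply]

theorem mapsTo_br_antifixed_fixed (hσbr : ∀ x y, σ (br x y) = br (σ x) (σ y))
    (hk : ∀ x, x ∈ k ↔ σ x = x) (hp : ∀ x, x ∈ p ↔ σ x = -x) (hX : X ∈ p) :
    MapsTo (br X) p k := fun z hz => by
  rw [SetLike.mem_coe, hk, hσbr, (hp X).1 hX, (hp z).1 hz, map_neg, map_neg,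
    LinearMap.neg_apply, neg_neg]

end Bracket

section RestrictedRootSpace

variable {g : Type*} [NormedAddCommGroup g] [InnerProductSpace ℝ g] {br : g →ₗ[ℝ] g →ₗ[ℝ] g}
  {t : Submodule ℝ g} {α : t →ₗ[ℝ] ℝ}

theorem mem_restrictedRootSpace_iff {z : g} :
    z ∈ restrictedRootSpace br t α ↔
      ∀ Y : t, br Y (br Y z) + (4 * Real.pi ^ 2 * α Y ^ 2) • z = 0 := by
  simp [restrictedRootSpace, Submodule.mem_iInf]

theorem br_br_of_mem_restrictedRootSpace {z : g} (hz : z ∈ restrictedRootSpace br t α) (X : t) :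
    br X (br X z) = -(4 * Real.pi ^ 2 * α X ^ 2) • z := by
  rw [neg_smul, eq_neg_iff_add_eq_zero]
  exact mem_restrictedRootSpace_iff.1 hz X

theorem mapsTo_restrictedRootSpace {f : g →ₗ[ℝ] g} (hf : ∀ (Y : t) w, br Y (f w) = f (br Y w)) :
    MapsTo f (restrictedRootSpace br t α) (restrictedRootSpace br t α) := fun z hz => by
  rw [SetLike.mem_coe, mem_restrictedRootSpace_iff] at hz ⊢
  intro Y
  rw [hf, hf, ← map_smul, ← map_add, hz Y, map_zero]

end RestrictedRootSpace

theorem stmt_3_general (g : Type*) [NormedAddCommGroup g] [InnerProductSpace ℝ g]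
    (br : g →ₗ[ℝ] g →ₗ[ℝ] g)
    (hjacobi : ∀ x y z : g, br x (br y z) = br (br x y) z + br y (br x z))
    (σ : g →ₗ[ℝ] g) (hσbr : ∀ x y, σ (br x y) = br (σ x) (σ y))
    (k p : Submodule ℝ g)
    (hk : ∀ x, x ∈ k ↔ σ x = x) (hp : ∀ x, x ∈ p ↔ σ x = -x)
    (t : Submodule ℝ g) (htp : t ≤ p)
    (htab : ∀ x ∈ t, ∀ y ∈ t, br x y = 0)
    (α : t →ₗ[ℝ] ℝ)
    (X : t) (hX : α X ≠ 0) :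
    Set.BijOn (fun z => br (X : g) z)
        ((restrictedRootSpace br t α ⊓ k : Submodule ℝ g) : Set g)
        ((restrictedRootSpace br t α ⊓ p : Submodule ℝ g) : Set g) ∧
      Module.finrank ℝ (restrictedRootSpace br t α ⊓ k : Submodule ℝ g)
        = Module.finrank ℝ (restrictedRootSpace br t α ⊓ p : Submodule ℝ g) := by
  set S := restrictedRootSpace br t α
  have hS : MapsTo (br X) S S := mapsTo_restrictedRootSpace fun Y =>
    br_br_comm_of_br_eq_zero br hjacobi (htab _ Y.2 _ X.2)
  have hc : -(4 * Real.pi ^ 2 * α X ^ 2) ≠ 0 := by simp [hX, Real.pi_ne_zero]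
  have hbij : BijOn (br X) (S ⊓ k : Submodule ℝ g) (S ⊓ p : Submodule ℝ g) :=
    bijOn_of_mapsTo_of_comp_self_eq_smul (br X)
      (fun z hz => ⟨hS hz.1, mapsTo_br_fixed_antifixed br hσbr hk hp (htp X.2) hz.2⟩)
      (fun z hz => ⟨hS hz.1, mapsTo_br_antifixed_fixed br hσbr hk hp (htp X.2) hz.2⟩)
      hc (fun z hz => br_br_of_mem_restrictedRootSpace hz.1 X)
      (fun z hz => br_br_of_mem_restrictedRootSpace hz.1 X)
  exact ⟨hbij, hbij.finrank_eq⟩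

/-- with notation as in the restricted root space decomposition, for any
`X ∈ t` and any restricted root `α` with `α(X) ≠ 0`, the map `ad X = br X` restricts to
a linear isomorphism from `k_{t,[α]} = g_{t,[α]} ∩ k` onto `p_{t,[α]} = g_{t,[α]} ∩ p`;
in particular `dim k_{t,[α]} = dim p_{t,[α]}`. -/
theorem stmt_3 (g : Type*) [NormedAddCommGroup g] [InnerProductSpace ℝ g]
    [FiniteDimensional ℝ g]
    (br : g →ₗ[ℝ] g →ₗ[ℝ] g)
    (halt : ∀ x : g, br x x = 0)
    (hjacobi : ∀ x y z : g, br x (br y z) = br (br x y) z + br y (br x z))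
    (hinv : ∀ x y z : g, ⟪br x y, z⟫ = -⟪y, br x z⟫)
    (σ : g →ₗ[ℝ] g) (hσbr : ∀ x y, σ (br x y) = br (σ x) (σ y))
    (hσinv : ∀ x, σ (σ x) = x)
    (k p : Submodule ℝ g)
    (hk : ∀ x, x ∈ k ↔ σ x = x) (hp : ∀ x, x ∈ p ↔ σ x = -x)
    (t : Submodule ℝ g) (htp : t ≤ p)
    (htab : ∀ x ∈ t, ∀ y ∈ t, br x y = 0)
    (htmax : ∀ t' : Submodule ℝ g, t' ≤ p → (∀ x ∈ t', ∀ y ∈ t', br x y = 0) →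
      t ≤ t' → t' = t)
    -- `α` is a restricted root:
    (α : t →ₗ[ℝ] ℝ) (hα : α ≠ 0) (hαroot : restrictedRootSpace br t α ≠ ⊥)
    (X : t) (hX : α X ≠ 0) :
    Set.BijOn (fun z => br (X : g) z)
        ((restrictedRootSpace br t α ⊓ k : Submodule ℝ g) : Set g)
        ((restrictedRootSpace br t α ⊓ p : Submodule ℝ g) : Set g) ∧
      Module.finrank ℝ (restrictedRootSpace br t α ⊓ k : Submodule ℝ g)
        = Module.finrank ℝ (restrictedRootSpace br t α ⊓ p : Submodule ℝ g) :=
  stmt_3_general g br hjacobi σ hσbr k p hk hp t htp htab α X hX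
end
end

section
/- Let T be a totally geodesic submanifold of a Riemannian manifold (S,g) and V a normal vector field along T which is parallel (flat) as a section of the normal bundle. Then the submanifold T' = {(x, ζ + V(x)) : x ∈ T, ζ ∈ T_x T} of TS ≅ T*S is preserved by the canonical almost complex structure J_g associated to the Levi-Civita connection. -/
open scoped RealInnerProductSpace

/-! Along `T'` the vertical part of a tangent vector `(a, b + (DV)ₓ a)` is `b` plus the
covariant derivative `∇ₐ(ζ + V) = (DV)ₓ a + Γₓ(a, ζ + V x)`, which stays in `T` because `T` is
totally geodesic and `V` is flat normal.  Hence `J_g` sends it to a vector of the same shape: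
its first component `a'` lies in `T`, and its second is `-∇_{a'}(ζ + V) - a + (DV)ₓ a'`. -/

theorem AddSubgroup.exists_mem_shifted_graph_of_add_mem {M : Type*} [AddCommGroup M]
    (T : AddSubgroup M) (L G : M → M) (hLG : ∀ a ∈ T, L a + G a ∈ T)
    {a b : M} (ha : a ∈ T) (hb : b ∈ T) :
    ∃ a' ∈ T, ∃ b' ∈ T, (b + L a + G a, -G (b + L a + G a) - a) = (a', b' + L a') := by
  have ha' : b + L a + G a ∈ T := by
    rw [add_assoc]
    exact T.add_mem hb (hLG a ha)
  refine ⟨_, ha', -(L (b + L a + G a) + G (b + L a + G a)) - a,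
    T.sub_mem (T.neg_mem (hLG _ ha')) ha, ?_⟩
  ext
  · rfl
  · dsimp only
    abel

theorem covariantDeriv_mem_of_totallyGeodesic {E : Type*} [NormedAddCommGroup E]
    [NormedSpace ℝ E] (Γ : E → E →ₗ[ℝ] E →ₗ[ℝ] E) (T : Submodule ℝ E)
    (hTG : ∀ x ∈ T, ∀ a ∈ T, ∀ b ∈ T, Γ x a b ∈ T) (V : E → E)
    (hflat : ∀ x ∈ T, ∀ a ∈ T, fderiv ℝ V x a + Γ x a (V x) ∈ T)
    {x ζ a : E} (hx : x ∈ T) (hζ : ζ ∈ T) (ha : a ∈ T) :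
    fderiv ℝ V x a + Γ x a (ζ + V x) ∈ T := by
  rw [map_add, add_left_comm]
  exact T.add_mem (hTG x hx a ha ζ hζ) (hflat x hx a ha)

theorem stmt_16_general (E : Type*) [NormedAddCommGroup E] [InnerProductSpace ℝ E]
    -- the Christoffel symbols of the Levi-Civita connection:
    (Γ : E → E →ₗ[ℝ] E →ₗ[ℝ] E)
    -- the totally geodesic submanifold `T`:
    (T : Submodule ℝ E)
    (hTG : ∀ x ∈ T, ∀ a ∈ T, ∀ b ∈ T, Γ x a b ∈ T)
    -- the normal vector field `V` along `T`:
    (V : E → E)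
    -- `V` is flat as a section of the normal bundle: `∇_a V ∈ T_x T` for `a ∈ T_x T`:
    (hflat : ∀ x ∈ T, ∀ a ∈ T, fderiv ℝ V x a + Γ x a (V x) ∈ T) :
    ∀ x ∈ T, ∀ ζ ∈ T, ∀ a ∈ T, ∀ b ∈ T,
      ∃ a' ∈ T, ∃ b' ∈ T,
        ((b + fderiv ℝ V x a) + Γ x a (ζ + V x),
          -Γ x ((b + fderiv ℝ V x a) + Γ x a (ζ + V x)) (ζ + V x) - a)
        = (a', b' + fderiv ℝ V x a') := by
  intro x hx ζ hζ a ha b hb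
  exact T.toAddSubgroup.exists_mem_shifted_graph_of_add_mem (fderiv ℝ V x)
    (fun c ↦ Γ x c (ζ + V x))
    (fun c hc ↦ covariantDeriv_mem_of_totallyGeodesic Γ T hTG V hflat hx hζ hc) ha hb

/-- Let `T` be a totally geodesic submanifold of a Riemannian manifold
`(S,g)` and `V` a normal vector field along `T` which is parallel (flat) as a section of
the normal bundle.  Then the submanifold
`T' = {(x, ζ + V(x)) : x ∈ T, ζ ∈ T_x T}` of `TS ≅ T*S` is preserved by the canonical
almost complex structure `J_g` associated to the Levi-Civita connection.

Stated in local coordinates: `S` is (an open piece of) the inner product space `E`, the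
Levi-Civita connection is encoded by its (symmetric) Christoffel symbols
`Γ : E → E →ₗ E →ₗ E`, and `T` is a linear subspace (e.g. in normal coordinates).
At a point `(x, w)` of `TS = E × E` the horizontal subspace is
`{(a, −Γ(x)(a)(w)) : a ∈ E}`, the vertical one is `{0} × E`, and `J_g(h,v) = (v,−h)`
with respect to this splitting, which gives
`J(a,b) = (b + Γ x a w, −Γ x (b + Γ x a w) w − a)`.  The tangent space of `T'` at
`(x, ζ + V x)` consists of the velocities `(ẋ, ζ̇ + (DV)_x ẋ)` with `ẋ, ζ̇ ∈ T`, i.e.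
of the vectors `(a, b + (DV)_x a)`, `a, b ∈ T`; 'preserved' means `J` maps this set to
itself. -/
theorem stmt_16 (E : Type*) [NormedAddCommGroup E] [InnerProductSpace ℝ E]
    [FiniteDimensional ℝ E]
    -- the Christoffel symbols of the Levi-Civita connection:
    (Γ : E → E →ₗ[ℝ] E →ₗ[ℝ] E) (hΓsym : ∀ x a b, Γ x a b = Γ x b a)
    -- the totally geodesic submanifold `T`:
    (T : Submodule ℝ E)
    (hTG : ∀ x ∈ T, ∀ a ∈ T, ∀ b ∈ T, Γ x a b ∈ T)
    -- the normal vector field `V` along `T`: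
    (V : E → E) (hV : ContDiff ℝ 1 V)
    (hnormal : ∀ x ∈ T, ∀ u ∈ T, ⟪V x, u⟫ = 0)
    -- `V` is flat as a section of the normal bundle: `∇_a V ∈ T_x T` for `a ∈ T_x T`:
    (hflat : ∀ x ∈ T, ∀ a ∈ T, fderiv ℝ V x a + Γ x a (V x) ∈ T) :
    ∀ x ∈ T, ∀ ζ ∈ T, ∀ a ∈ T, ∀ b ∈ T,
      ∃ a' ∈ T, ∃ b' ∈ T,
        ((b + fderiv ℝ V x a) + Γ x a (ζ + V x),
          -Γ x ((b + fderiv ℝ V x a) + Γ x a (ζ + V x)) (ζ + V x) - a)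
        = (a', b' + fderiv ℝ V x a') :=
  stmt_16_general E Γ T hTG V hflat
end
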